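/- The function g₁(z; α) = (4 + 8α²z² + α⁴z⁴) e^{-z}/(C₂(α)(1 + e^{-z})^2) is a probability density on ℝ for every real α, where C₂(α) = 4 + 8π²α²/3 + 7π⁴α⁴/15; moreover it is symmetric: g₁(-z; α) = g₁(z; α). -/

import Mathlib

/-!
Up to the factor `1 / C₂ α`, `g₁ z α` is the even polynomial `4 + 8 α² z² + α⁴ z⁴` times the
logistic density `w z = e^{-z} / (1 + e^{-z})²`, which is even and positive. For `t > 0`,
differentiating the geometric series gives `w t = ∑ (-1)^(n+1) n e^{-n t}`; integrating termwise,
`∫₀^∞ t^k w = k! η(k)` with `η(k) = (1 - 2^{1-k}) ζ(k)`, so `ζ(2) = π²/6` and `ζ(4) = π⁴/90` give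
the moments `π²/6` and `7π⁴/30`, while `∫₀^∞ w = 1/2`. By evenness,
`∫ (4 + 8 α² z² + α⁴ z⁴) w = 2 (2 + 8 α² π²/6 + 7 α⁴ π⁴/30) = C₂ α`.
-/

open Real MeasureTheory

noncomputable def C₂ (α : ℝ) : ℝ := 4 + 8 * π ^ 2 * α ^ 2 / 3 + 7 * π ^ 4 * α ^ 4 / 15

noncomputable def g₁ (z α : ℝ) : ℝ :=
  (4 + 8 * α ^ 2 * z ^ 2 + α ^ 4 * z ^ 4) * Real.exp (-z) / (C₂ α * (1 + Real.exp (-z)) ^ 2)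

open Set Filter Topology
open scoped Nat

noncomputable def logisticDensity (t : ℝ) : ℝ := exp (-t) / (1 + exp (-t)) ^ 2

lemma logisticDensity_neg (t : ℝ) : logisticDensity (-t) = logisticDensity t := by
  have := (exp_pos t).ne'
  rw [logisticDensity, logisticDensity, neg_neg, exp_neg]
  field_simp
  ring

lemma logisticDensity_nonneg (t : ℝ) : 0 ≤ logisticDensity t := by
  unfold logisticDensity
  positivity

lemma continuous_logisticDensity : Continuous logisticDensity :=
  .div (by fun_prop) (by fun_prop) fun t ↦ by positivity

lemma logisticDensity_le_exp_neg (t : ℝ) : logisticDensity t ≤ exp (-t) :=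
  div_le_self (exp_pos _).le (one_le_pow₀ (by linarith [exp_pos (-t)]))

lemma hasSum_logisticDensity {t : ℝ} (ht : 0 < t) :
    HasSum (fun n : ℕ ↦ (-1) ^ (n + 1) * (n * exp (-(n * t)))) (logisticDensity t) := by
  have hr : ‖-exp (-t)‖ < 1 := by
    rw [norm_neg, norm_of_nonneg (exp_pos _).le, exp_lt_one_iff]
    linarith
  have hw : logisticDensity t = -(-exp (-t) / (1 - -exp (-t)) ^ 2) := by
    unfold logisticDensity
    rw [sub_neg_eq_add]
    ring
  rw [hw]
  refine (hasSum_coe_mul_geometric_of_norm_lt_one hr).neg.congr_fun fun n ↦ ?_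
  rw [show -(n * t) = n * -t by ring, exp_nat_mul, neg_pow, pow_succ]
  ring

lemma hasDerivAt_inv_one_add_exp_neg (t : ℝ) :
    HasDerivAt (fun s ↦ (1 + exp (-s))⁻¹) (logisticDensity t) t := by
  refine ((((hasDerivAt_neg t).exp).const_add 1).inv (by positivity)).congr_deriv ?_
  unfold logisticDensity
  ring

lemma integral_pow_mul_exp_neg_mul (k : ℕ) {c : ℝ} (hc : 0 < c) :
    ∫ t in Ioi (0 : ℝ), t ^ k * exp (-(c * t)) = k ! / c ^ (k + 1) := by
  have h := integral_rpow_mul_exp_neg_mul_Ioi (a := k + 1) (by positivity) hc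
  rw [add_sub_cancel_right, Gamma_nat_eq_factorial, one_div, inv_rpow hc.le,
    ← Nat.cast_add_one, rpow_natCast] at h
  simp_rw [rpow_natCast] at h
  rw [h, div_eq_inv_mul]

lemma integrableOn_pow_mul_exp_neg_mul (k : ℕ) {c : ℝ} (hc : 0 < c) :
    IntegrableOn (fun t ↦ t ^ k * exp (-(c * t))) (Ioi 0) := by
  have hk : (-1 : ℝ) < k := by linarith [k.cast_nonneg (α := ℝ)]
  refine (integrableOn_rpow_mul_exp_neg_mul_rpow (p := 1) hk one_pos hc).congr_fun
    (fun t _ ↦ ?_) measurableSet_Ioi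
  simp only [rpow_one, rpow_natCast, neg_mul]

lemma integrableOn_pow_mul_logisticDensity (k : ℕ) :
    IntegrableOn (fun t ↦ t ^ k * logisticDensity t) (Ioi 0) := by
  refine (integrableOn_pow_mul_exp_neg_mul k one_pos).mono'
    ((continuous_pow k).mul continuous_logisticDensity).aestronglyMeasurable ?_
  filter_upwards [self_mem_ae_restrict measurableSet_Ioi] with t (ht : 0 < t)
  rw [norm_of_nonneg (mul_nonneg (pow_nonneg ht.le k) (logisticDensity_nonneg t)), one_mul]
  exact mul_le_mul_of_nonneg_left (logisticDensity_le_exp_neg t) (pow_nonneg ht.le k)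

lemma integral_logisticDensity_Ioi : ∫ t in Ioi (0 : ℝ), logisticDensity t = 1 / 2 := by
  have hlim : Tendsto (fun s : ℝ ↦ (1 + exp (-s))⁻¹) atTop (𝓝 1) := by
    simpa using (tendsto_exp_neg_atTop_nhds_zero.const_add 1).inv₀ (by norm_num)
  rw [integral_Ioi_of_hasDerivAt_of_tendsto' (fun t _ ↦ hasDerivAt_inv_one_add_exp_neg t)
    (by simpa using integrableOn_pow_mul_logisticDensity 0) hlim]
  norm_num

lemma hasSum_neg_one_pow_succ_mul {R : Type*} [Ring R] [TopologicalSpace R] [IsTopologicalRing R]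
    {a : ℕ → R} {S T : R} (hS : HasSum a S) (hT : HasSum (fun m ↦ a (2 * m)) T) :
    HasSum (fun n ↦ (-1) ^ (n + 1) * a n) (S - 2 * T) := by
  -- `d` vanishes at odd indices and is `2 a n` at even ones.
  set d : ℕ → R := fun n ↦ a n - (-1) ^ (n + 1) * a n
  have hd : HasSum d (2 * T) := by
    refine ((mul_right_injective₀ (two_ne_zero' ℕ)).hasSum_iff fun n hn ↦ ?_).1 ?_
    · obtain ⟨m, rfl⟩ : Odd n :=
        Nat.not_even_iff_odd.1 fun ⟨m, hm⟩ ↦ hn ⟨m, show 2 * m = n by omega⟩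
      simp [d, pow_succ, pow_mul]
    · refine (hT.mul_left 2).congr_fun fun m ↦ ?_
      simp [d, pow_succ, two_mul]
  exact (hS.sub hd).congr_fun fun n ↦ by simp [d]

lemma integral_pow_mul_logisticDensity_Ioi {k : ℕ} (hk : 2 ≤ k) :
    ∫ t in Ioi (0 : ℝ), t ^ k * logisticDensity t
      = k ! * (1 - 2 / 2 ^ k) * ∑' n : ℕ, 1 / (n : ℝ) ^ k := by
  set S := ∑' n : ℕ, 1 / (n : ℝ) ^ k
  have hS : HasSum (fun n : ℕ ↦ 1 / (n : ℝ) ^ k) S :=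
    (summable_one_div_nat_pow.2 (by omega)).hasSum
  have hT : HasSum (fun m : ℕ ↦ 1 / ((2 * m : ℕ) : ℝ) ^ k) (1 / 2 ^ k * S) :=
    (hS.mul_left _).congr_fun fun m ↦ by push_cast; rw [mul_pow, one_div_mul_one_div]
  set f : ℕ → ℝ → ℝ := fun n t ↦ n * (t ^ k * exp (-(n * t)))
  have hf : ∀ n : ℕ,
      IntegrableOn (f n) (Ioi 0) ∧ ∫ t in Ioi 0, f n t = k ! * (1 / (n : ℝ) ^ k) := by
    rintro (_ | n)
    · simp [f, zero_pow (by omega : k ≠ 0)]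
    · have hn : (0 : ℝ) < (n + 1 : ℕ) := by positivity
      refine ⟨(integrableOn_pow_mul_exp_neg_mul k hn).const_mul _, ?_⟩
      rw [integral_const_mul, integral_pow_mul_exp_neg_mul k hn]
      field_simp
      ring
  have hnorm : ∀ n : ℕ, ∫ t in Ioi 0, ‖(-1) ^ (n + 1) * f n t‖ = k ! * (1 / (n : ℝ) ^ k) := by
    intro n
    rw [← (hf n).2]
    refine setIntegral_congr_fun measurableSet_Ioi fun t (ht : 0 < t) ↦ ?_
    rw [norm_mul, norm_pow, norm_neg, norm_one, one_pow, one_mul, norm_of_nonneg (by positivity)]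
  have hsummable : Summable fun n : ℕ ↦ ∫ t in Ioi 0, ‖(-1) ^ (n + 1) * f n t‖ :=
    (hS.mul_left (k ! : ℝ)).summable.congr fun n ↦ (hnorm n).symm
  have hseries := hasSum_integral_of_summable_integral_norm
    (fun n ↦ ((hf n).1.const_mul ((-1) ^ (n + 1)))) hsummable
  have hlimit : ∫ t in Ioi 0, ∑' n, (-1) ^ (n + 1) * f n t
      = ∫ t in Ioi (0 : ℝ), t ^ k * logisticDensity t := by
    refine setIntegral_congr_fun measurableSet_Ioi fun t (ht : 0 < t) ↦ ?_
    refine (((hasSum_logisticDensity ht).mul_left (t ^ k)).congr_fun fun n ↦ ?_).tsum_eq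
    ring
  rw [hlimit] at hseries
  have heta : HasSum (fun n ↦ ∫ t in Ioi 0, (-1) ^ (n + 1) * f n t)
      (k ! * (S - 2 * (1 / 2 ^ k * S))) :=
    ((hasSum_neg_one_pow_succ_mul hS hT).mul_left (k ! : ℝ)).congr_fun fun n ↦ by
      rw [integral_const_mul, (hf n).2]
      ring
  rw [hseries.unique heta]
  ring

lemma integral_sq_mul_logisticDensity_Ioi :
    ∫ t in Ioi (0 : ℝ), t ^ 2 * logisticDensity t = π ^ 2 / 6 := by
  rw [integral_pow_mul_logisticDensity_Ioi le_rfl, hasSum_zeta_two.tsum_eq]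
  norm_num [Nat.factorial]

lemma integral_pow_four_mul_logisticDensity_Ioi :
    ∫ t in Ioi (0 : ℝ), t ^ 4 * logisticDensity t = 7 * π ^ 4 / 30 := by
  rw [integral_pow_mul_logisticDensity_Ioi (by norm_num), hasSum_zeta_four.tsum_eq]
  norm_num [Nat.factorial]
  ring

lemma integral_mul_logisticDensity_eq_C₂ (α : ℝ) :
    ∫ z, (4 + 8 * α ^ 2 * z ^ 2 + α ^ 4 * z ^ 4) * logisticDensity z = C₂ α := by
  set p : ℝ → ℝ := fun z ↦ (4 + 8 * α ^ 2 * z ^ 2 + α ^ 4 * z ^ 4) * logisticDensity z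
  have hp_neg : ∀ z, p (-z) = p z := fun z ↦ by
    simp only [p, logisticDensity_neg]
    ring
  have hp_abs : ∀ z, p |z| = p z := fun z ↦ by
    rcases abs_choice z with h | h <;> simp only [h, hp_neg]
  have hp : ∀ z, p z = 4 * (z ^ 0 * logisticDensity z) + 8 * α ^ 2 * (z ^ 2 * logisticDensity z)
      + α ^ 4 * (z ^ 4 * logisticDensity z) := fun z ↦ by ring
  have hint := integrableOn_pow_mul_logisticDensity
  calc ∫ z, p z = ∫ z, p |z| := by simp_rw [hp_abs]
    _ = 2 * ∫ t in Ioi 0, p t := integral_comp_abs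
    _ = 2 * (4 * (1 / 2) + 8 * α ^ 2 * (π ^ 2 / 6) + α ^ 4 * (7 * π ^ 4 / 30)) := by
      simp_rw [hp]
      rw [integral_add, integral_add, integral_const_mul, integral_const_mul, integral_const_mul,
        integral_sq_mul_logisticDensity_Ioi, integral_pow_four_mul_logisticDensity_Ioi,
        ← integral_logisticDensity_Ioi]
      · simp
      all_goals
        first
        | exact (hint _).const_mul _
        | exact ((hint 0).const_mul _).add ((hint 2).const_mul _)
    _ = C₂ α := by
      rw [C₂]
      ring

lemma C₂_pos (α : ℝ) : 0 < C₂ α := by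
  unfold C₂
  positivity

lemma g₁_eq (z α : ℝ) :
    g₁ z α = (4 + 8 * α ^ 2 * z ^ 2 + α ^ 4 * z ^ 4) * logisticDensity z / C₂ α := by
  rw [g₁, logisticDensity, mul_comm (C₂ α), ← div_div, mul_div_assoc]

theorem SCBASLG2_density (α : ℝ) :
    (∀ z : ℝ, 0 ≤ g₁ z α) ∧ (∫ z : ℝ, g₁ z α) = 1 ∧ (∀ z : ℝ, g₁ (-z) α = g₁ z α) := by
  simp_rw [g₁_eq]
  refine ⟨fun z ↦ ?_, ?_, fun z ↦ ?_⟩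
  · have := logisticDensity_nonneg z
    have := C₂_pos α
    positivity
  · rw [integral_div, integral_mul_logisticDensity_eq_C₂, div_self (C₂_pos α).ne']
  · rw [logisticDensity_neg]
    ring
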